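/- Let h ⊆ g be a Lie subalgebra with annihilator h° ⊆ g*, and assume δ(X) ∈ h⊗h for all X ∈ h (h is a sub-Lie bialgebra). Then h × h° is a Lie subalgebra of the Drinfel'd double D(g), the crossed brackets satisfy [(X,0),(0,α)] = (0, −α∘ad_X) ∈ {0} × h° for all X ∈ h and α ∈ h°, and {0} × h° is a Lie ideal of the subalgebra h × h°; hence h × h° is the semidirect product of h acting on h° by the coadjoint action. -/
import Mathlib


open TensorProduct

/-- If `h ⊆ g` is a Lie subalgebra with `δ(X) ∈ h ⊗ h` for all `X ∈ h`
(a sub-Lie bialgebra), then `h × h°` is a Lie subalgebra of `D(g)`, the crossed brackets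
satisfy `[(X,0),(0,α)] = (0, −α∘ad_X) ∈ {0} × h°`, and `{0} × h°` is a Lie ideal of the
subalgebra `h × h°`; hence `h × h°` is the semidirect product of `h` acting on `h°` by
the coadjoint action. -/
theorem sub_bialgebra_gives_semidirect_product
    (g : Type*) [LieRing g] [LieAlgebra ℝ g] [FiniteDimensional ℝ g]
    (br : Module.Dual ℝ g →ₗ[ℝ] Module.Dual ℝ g →ₗ[ℝ] Module.Dual ℝ g)
    (br_alt : ∀ α : Module.Dual ℝ g, br α α = 0)
    (br_jacobi : ∀ α β γ : Module.Dual ℝ g,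
      br (br α β) γ + br (br β γ) α + br (br γ α) β = 0)
    (δ : g →ₗ[ℝ] g ⊗[ℝ] g)
    (hδ : ∀ (X : g) (α β : Module.Dual ℝ g),
      TensorProduct.lid ℝ ℝ (TensorProduct.map α β (δ X)) = br α β X)
    (cocycle : ∀ X Y : g,
      δ ⁅X, Y⁆ =
        (TensorProduct.map (LieAlgebra.ad ℝ g X : g →ₗ[ℝ] g) (LinearMap.id : g →ₗ[ℝ] g)
            + TensorProduct.map (LinearMap.id : g →ₗ[ℝ] g) (LieAlgebra.ad ℝ g X : g →ₗ[ℝ] g)) (δ Y)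
          - (TensorProduct.map (LieAlgebra.ad ℝ g Y : g →ₗ[ℝ] g) (LinearMap.id : g →ₗ[ℝ] g)
            + TensorProduct.map (LinearMap.id : g →ₗ[ℝ] g) (LieAlgebra.ad ℝ g Y : g →ₗ[ℝ] g)) (δ X))
    (a : Module.Dual ℝ g →ₗ[ℝ] g →ₗ[ℝ] g)
    (ha : ∀ (α : Module.Dual ℝ g) (X : g) (β : Module.Dual ℝ g),
      β (a α X) = br α β X)
    (Dbr : g × Module.Dual ℝ g → g × Module.Dual ℝ g → g × Module.Dual ℝ g)
    (hDbr : ∀ (X Y : g) (α β : Module.Dual ℝ g),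
      Dbr (X, α) (Y, β) =
        (⁅X, Y⁆ + a β X - a α Y,
          br α β + α ∘ₗ (LieAlgebra.ad ℝ g Y : g →ₗ[ℝ] g)
            - β ∘ₗ (LieAlgebra.ad ℝ g X : g →ₗ[ℝ] g))) :
    ∀ h : LieSubalgebra ℝ g,
      -- `h` is a sub-Lie bialgebra: `δ(X) ∈ h ⊗ h` for all `X ∈ h`
      (∀ X ∈ h, δ X ∈
        LinearMap.range (TensorProduct.map (h : Submodule ℝ g).subtype
          (h : Submodule ℝ g).subtype)) →
      -- (i) `h × h°` is closed under the double bracket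
      ((∀ (X Y : g) (α β : Module.Dual ℝ g), X ∈ h → Y ∈ h →
          (∀ Z ∈ h, α Z = 0) → (∀ Z ∈ h, β Z = 0) →
          (Dbr (X, α) (Y, β)).1 ∈ h ∧ ∀ Z ∈ h, (Dbr (X, α) (Y, β)).2 Z = 0)
        ∧
        -- (ii) crossed brackets: `[(X,0),(0,α)] = (0, −α∘ad_X) ∈ {0} × h°`
        (∀ X ∈ h, ∀ α : Module.Dual ℝ g, (∀ Z ∈ h, α Z = 0) →
          Dbr (X, (0 : Module.Dual ℝ g)) ((0 : g), α)
            = ((0 : g), -(α ∘ₗ (LieAlgebra.ad ℝ g X : g →ₗ[ℝ] g)))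
          ∧ ∀ Z ∈ h, (α ∘ₗ (LieAlgebra.ad ℝ g X : g →ₗ[ℝ] g)) Z = 0)
        ∧
        -- (iii) `{0} × h°` is a Lie ideal of the subalgebra `h × h°`
        (∀ (X : g) (α β : Module.Dual ℝ g), X ∈ h →
          (∀ Z ∈ h, α Z = 0) → (∀ Z ∈ h, β Z = 0) →
          ((Dbr (X, α) ((0 : g), β)).1 = 0
            ∧ ∀ Z ∈ h, (Dbr (X, α) ((0 : g), β)).2 Z = 0)
          ∧ ((Dbr ((0 : g), β) (X, α)).1 = 0
            ∧ ∀ Z ∈ h, (Dbr ((0 : g), β) (X, α)).2 Z = 0))) := by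

  intro h hsub
  -- key lemma: if α vanishes on h and X ∈ h then br α β X = 0 for all β
  have key : ∀ X ∈ h, ∀ α : Module.Dual ℝ g, (∀ Z ∈ h, α Z = 0) →
      ∀ β : Module.Dual ℝ g, br α β X = 0 := by
    intro X hX α hα β
    obtain ⟨t, ht⟩ := hsub X hX
    have hαi : α ∘ₗ (h : Submodule ℝ g).subtype = 0 := by
      ext z; exact hα z z.2
    have : TensorProduct.map α β (δ X) = 0 := by
      rw [← ht, ← LinearMap.comp_apply, ← TensorProduct.map_comp, hαi]
      simp
    rw [← hδ X α β, this]; exact LinearEquiv.map_zero _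
  -- consequence: a α X = 0 when α ∈ h° and X ∈ h
  have akey : ∀ X ∈ h, ∀ α : Module.Dual ℝ g, (∀ Z ∈ h, α Z = 0) →
      a α X = 0 := by
    intro X hX α hα
    have : ∀ β : Module.Dual ℝ g, β (a α X) = 0 := fun β => by
      rw [ha]; exact key X hX α hα β
    exact (Module.forall_dual_apply_eq_zero_iff ℝ _).mp this
  refine ⟨?_, ?_, ?_⟩
  · intro X Y α β hX hY hα hβ
    rw [hDbr]
    constructor
    · simp only [akey X hX β hβ, akey Y hY α hα, add_zero, sub_zero]
      exact h.lie_mem hX hY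
    · intro Z hZ
      simp only [LinearMap.sub_apply, LinearMap.add_apply, LinearMap.comp_apply,
        LieAlgebra.ad_apply]
      rw [key Z hZ α hα β, hα _ (h.lie_mem hY hZ), hβ _ (h.lie_mem hX hZ)]
      ring
  · intro X hX α hα
    constructor
    · rw [hDbr]
      simp only [map_zero, LinearMap.zero_apply, akey X hX α hα]
      ext <;> simp
    · intro Z hZ
      simp only [LinearMap.comp_apply, LieAlgebra.ad_apply]
      exact hα _ (h.lie_mem hX hZ)
  · intro X α β hX hα hβ
    have h0 : (0 : g) ∈ h := h.zero_mem
    constructor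
    · rw [hDbr]
      constructor
      · simp [akey X hX β hβ]
      · intro Z hZ
        simp only [LinearMap.sub_apply, LinearMap.add_apply, LinearMap.comp_apply,
          LieAlgebra.ad_apply]
        rw [key Z hZ α hα β, hα _ (h.lie_mem h0 hZ), hβ _ (h.lie_mem hX hZ)]
        ring
    · rw [hDbr]
      constructor
      · simp [akey X hX β hβ, akey (0:g) h0 α hα]
      · intro Z hZ
        simp only [LinearMap.sub_apply, LinearMap.add_apply, LinearMap.comp_apply,
          LieAlgebra.ad_apply]
        rw [key Z hZ β hβ α, hβ _ (h.lie_mem hX hZ), hα _ (h.lie_mem h0 hZ)]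
        ring
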